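/- Let (X,d) be a dissimilarity space with d(x,y) > 0 for all distinct x,y ∈ X, such that M_max is a copartition of X, and let δ > 0 be the unique value such that the graph G_δ is not connected. Then δ = min{δ' > 0 : the graph G_{≤δ'} is connected}. -/

import Mathlib

structure Dissim (X : Type*) where
  d : X → X → ℝ
  symm : ∀ x y, d x y = d y x
  nonneg : ∀ x y, 0 ≤ d x y
  self : ∀ x, d x x = 0

variable {X : Type*}

def Compatible (D : Dissim X) (lt : X → X → Prop) : Prop :=
  ∀ x y z : X, lt x y → lt y z → D.d x y ≤ D.d x z ∧ D.d y z ≤ D.d x z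

def IsCompatOrder (D : Dissim X) (lt : X → X → Prop) : Prop :=
  IsStrictTotalOrder X lt ∧ Compatible D lt

def Robinson (D : Dissim X) : Prop :=
  ∃ lt : X → X → Prop, IsCompatOrder D lt

def IsMmodule (D : Dissim X) (M : Set X) : Prop :=
  ∀ z ∉ M, ∀ x ∈ M, ∀ y ∈ M, D.d z x = D.d z y

def IsInterval (lt : X → X → Prop) (I : Set X) : Prop :=
  ∀ a b c : X, lt a b → lt b c → a ∈ I → c ∈ I → b ∈ I

def IsBlock (D : Dissim X) (Y : Set X) : Prop :=
  ∀ lt : X → X → Prop, IsCompatOrder D lt → IsInterval lt Y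

noncomputable def diam (D : Dissim X) (Y : Set X) : ℝ :=
  sSup (Set.image2 D.d Y Y)

def Gdelta (D : Dissim X) (δ : ℝ) : SimpleGraph X where
  Adj x y := x ≠ y ∧ D.d x y ≠ δ
  symm := by
    constructor
    rintro x y ⟨hxy, hd⟩
    exact ⟨hxy.symm, by rw [D.symm]; exact hd⟩
  loopless := by refine ⟨?_⟩; rintro x ⟨h, -⟩; exact h rfl

def Gle (D : Dissim X) (δ : ℝ) : SimpleGraph X where
  Adj x y := x ≠ y ∧ D.d x y ≤ δ
  symm := by
    constructor
    rintro x y ⟨hxy, hd⟩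
    exact ⟨hxy.symm, by rw [D.symm]; exact hd⟩
  loopless := by refine ⟨?_⟩; rintro x ⟨h, -⟩; exact h rfl

def Glt (D : Dissim X) (δ : ℝ) : SimpleGraph X where
  Adj x y := x ≠ y ∧ D.d x y < δ
  symm := by
    constructor
    rintro x y ⟨hxy, hd⟩
    exact ⟨hxy.symm, by rw [D.symm]; exact hd⟩
  loopless := by refine ⟨?_⟩; rintro x ⟨h, -⟩; exact h rfl

def IsCompOf {V : Type*} (G : SimpleGraph V) (C : Set V) : Prop :=
  ∃ x : V, C = {y | G.Reachable x y}

def MMax (D : Dissim X) : Set (Set X) :=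
  {M | IsMmodule D M ∧ M ≠ Set.univ ∧
    ∀ M' : Set X, IsMmodule D M' → M' ≠ Set.univ → M ⊆ M' → M = M'}

def IsPartition {α : Type*} (P : Set (Set α)) : Prop :=
  (∀ A ∈ P, A.Nonempty) ∧
  (∀ A ∈ P, ∀ B ∈ P, A ≠ B → Disjoint A B) ∧
  ⋃₀ P = Set.univ

def IsCopartition {α : Type*} (P : Set (Set α)) : Prop :=
  IsPartition ((fun M => Mᶜ) '' P)

def SimpleGraph.restrictTo {V : Type*} (G : SimpleGraph V) (S : Set V) : SimpleGraph V where
  Adj x y := x ∈ S ∧ y ∈ S ∧ G.Adj x y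
  symm := by refine ⟨?_⟩; rintro x y ⟨hx, hy, h⟩; exact ⟨hy, hx, h.symm⟩
  loopless := by refine ⟨?_⟩; rintro x ⟨-, -, h⟩; exact G.irrefl h

def ConnectedWithin {V : Type*} (G : SimpleGraph V) (S : Set V) : Prop :=
  S.Nonempty ∧ ∀ x ∈ S, ∀ y ∈ S, (G.restrictTo S).Reachable x y

def IsCompWithin {V : Type*} (G : SimpleGraph V) (S : Set V) (C : Set V) : Prop :=
  ∃ x ∈ S, C = {y | (G.restrictTo S).Reachable x y}

def IsStrictTotalOrderOn {α : Type*} (S : Set α) (lt : α → α → Prop) : Prop :=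
  (∀ x ∈ S, ¬ lt x x) ∧
  (∀ x ∈ S, ∀ y ∈ S, ∀ z ∈ S, lt x y → lt y z → lt x z) ∧
  (∀ x ∈ S, ∀ y ∈ S, x ≠ y → (lt x y ∨ lt y x) ∧ ¬ (lt x y ∧ lt y x))

def CompatibleOn (D : Dissim X) (S : Set X) (lt : X → X → Prop) : Prop :=
  ∀ x ∈ S, ∀ y ∈ S, ∀ z ∈ S, lt x y → lt y z → D.d x y ≤ D.d x z ∧ D.d y z ≤ D.d x z

def IsCompatOrderOn (D : Dissim X) (S : Set X) (lt : X → X → Prop) : Prop :=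
  IsStrictTotalOrderOn S lt ∧ CompatibleOn D S lt

def FlatOn (D : Dissim X) (S : Set X) : Prop :=
  ∃ lt : X → X → Prop, IsCompatOrderOn D S lt ∧ (∃ x ∈ S, ∃ y ∈ S, lt x y) ∧
    ∀ lt' : X → X → Prop, IsCompatOrderOn D S lt' →
      (∀ x ∈ S, ∀ y ∈ S, (lt' x y ↔ lt x y)) ∨ (∀ x ∈ S, ∀ y ∈ S, (lt' x y ↔ lt y x))

def Flat (D : Dissim X) : Prop :=
  ∃ lt : X → X → Prop, IsCompatOrder D lt ∧ (∃ x y : X, lt x y) ∧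
    ∀ lt' : X → X → Prop, IsCompatOrder D lt' →
      (∀ x y : X, lt' x y ↔ lt x y) ∨ (∀ x y : X, lt' x y ↔ lt y x)

def IsCopointAt (D : Dissim X) (p : X) (C : Set X) : Prop :=
  IsMmodule D C ∧ C.Nonempty ∧ p ∉ C ∧
  ∀ C' : Set X, IsMmodule D C' → p ∉ C' → C ⊆ C' → C = C'

def bigGraph (D : Dissim X) (δ : ℝ) (I : Set (Set X)) : SimpleGraph (Set X) where
  Adj C C' := C ∈ I ∧ C' ∈ I ∧ C ≠ C' ∧ ∃ x ∈ C, ∃ y ∈ C', δ < D.d x y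
  symm := by
    constructor
    rintro C C' ⟨hC, hC', hne, x, hx, y, hy, hd⟩
    exact ⟨hC', hC, hne.symm, y, hy, x, hx, by rw [D.symm]; exact hd⟩
  loopless := by refine ⟨?_⟩; rintro C ⟨-, -, hne, -⟩; exact hne rfl

/-! The complement of a disconnected graph is connected, and every edge of the complement of
`G_δ` has weight exactly `δ`, so it lies in `G_{≤δ}`; for `δ' < δ`, `G_{≤δ'}` is a subgraph of
the disconnected graph `G_δ`. -/

theorem compl_Gdelta_le_Gle (D : Dissim X) (δ : ℝ) : (Gdelta D δ)ᶜ ≤ Gle D δ := by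
  rintro x y ⟨hxy, hnot⟩
  exact ⟨hxy, (not_not.mp fun h => hnot ⟨hxy, h⟩).le⟩

theorem Gle_le_Gdelta_of_lt (D : Dissim X) {δ' δ : ℝ} (h : δ' < δ) : Gle D δ' ≤ Gdelta D δ :=
  fun _ _ ⟨hxy, hd⟩ => ⟨hxy, (hd.trans_lt h).ne⟩

theorem Gle_connected_of_not_Gdelta_connected [Nonempty X] (D : Dissim X) {δ : ℝ}
    (hnc : ¬ (Gdelta D δ).Connected) : (Gle D δ).Connected :=
  ((Gdelta D δ).connected_or_connected_compl.resolve_left hnc).mono (compl_Gdelta_le_Gle D δ)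

theorem stmt8_general [Nonempty X] (D : Dissim X)
    (δ : ℝ) (hδ : 0 < δ)
    (hnc : ¬ (Gdelta D δ).Connected) :
    IsLeast {δ' : ℝ | 0 < δ' ∧ (Gle D δ').Connected} δ := by
  refine ⟨⟨hδ, Gle_connected_of_not_Gdelta_connected D hnc⟩, ?_⟩
  rintro δ' ⟨-, hc⟩
  by_contra! hlt
  exact hnc (hc.mono (Gle_le_Gdelta_of_lt D hlt))

/-- if M_max is a copartition and δ is the unique value for which G_δ
is disconnected, then δ is the minimum of {δ' > 0 : G_{≤δ'} is connected}. -/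
theorem stmt8 [Fintype X] [Nonempty X] (D : Dissim X)
    (hpos : ∀ x y : X, x ≠ y → 0 < D.d x y)
    (hcop : IsCopartition (MMax D))
    (δ : ℝ) (hδ : 0 < δ)
    (hnc : ¬ (Gdelta D δ).Connected) :
    IsLeast {δ' : ℝ | 0 < δ' ∧ (Gle D δ').Connected} δ :=
  stmt8_general D δ hδ hnc
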